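/- Let P ⊆ ℝ^n be a compact convex set with nonempty interior. For each positive integer m let N_m = #((m • P) ∩ ℤ^n). Then the rescaled average of lattice points of the dilates converges to the centroid of P: lim_{m→∞} (1/(m·N_m)) · Σ_{u ∈ (m • P) ∩ ℤ^n} u = b(P), where b(P) = (1/vol(P)) ∫_P x dx ∈ ℝ^n is the centroid (barycenter) of P with respect to Lebesgue measure. -/

import Mathlib

open MeasureTheory Filter Topology Pointwise

/-- The set of lattice points of the `m`-th dilate of `P ⊆ ℝⁿ`, viewed as
integer vectors `u ∈ ℤⁿ` whose real image lies in `m • P`. -/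
def latticePointsOfDilate (n : ℕ) (P : Set (Fin n → ℝ)) (m : ℕ) : Set (Fin n → ℤ) :=
  {u : Fin n → ℤ | (fun i => (u i : ℝ)) ∈ (m : ℝ) • P}

/-- The centroid (barycenter) of a set `P ⊆ ℝⁿ` with respect to Lebesgue measure:
`b(P) = (1 / vol P) ∫_P x dx`. -/
noncomputable def centroid (n : ℕ) (P : Set (Fin n → ℝ)) : Fin n → ℝ :=
  ((volume P).toReal)⁻¹ • ∫ x in P, x

/-!
For `m ≠ 0`, `u ↦ u / m` identifies the lattice points of `m • P` with `P ∩ m⁻¹ ℤⁿ`, so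
`m⁻ⁿ ∑ F (u / m)` is a Riemann sum of `F` over `P` for the grid of cubes of side `1 / m`. The
boundary of a convex body is Lebesgue-null, so these sums converge to `∫_P F` for continuous `F`.
Taking `F = 1` and `F = xᵢ` and dividing (`vol P > 0` by the nonempty interior) gives the `i`-th
coordinate of the centroid.
-/

open Bornology Submodule

theorem finite_preimage_intCast_of_isBounded {ι : Type*} [Fintype ι] {K : Set (ι → ℝ)}
    (hK : IsBounded K) : ((fun u : ι → ℤ => fun i => (u i : ℝ)) ⁻¹' K).Finite :=
  have hiso : Isometry (fun u : ι → ℤ => fun i => (u i : ℝ)) :=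
    .piMap (fun _ => ((↑) : ℤ → ℝ)) fun _ => Real.isometry_intCast
  (hiso.antilipschitz.isBounded_preimage hK).isCompact_closure.finite_of_discrete.subset
    subset_closure

section

variable {n : ℕ} {P : Set (Fin n → ℝ)}

theorem latticePointsOfDilate_finite (hP : IsBounded P) (m : ℕ) :
    (latticePointsOfDilate n P m).Finite :=
  finite_preimage_intCast_of_isBounded (hP.smul₀ _)

theorem mem_latticePointsOfDilate_iff {m : ℕ} (hm : m ≠ 0) {u : Fin n → ℤ} :
    u ∈ latticePointsOfDilate n P m ↔ (fun i => (u i : ℝ) / m) ∈ P := by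
  rw [latticePointsOfDilate, Set.mem_ofPred,
    Set.mem_smul_set_iff_inv_smul_mem₀ (Nat.cast_ne_zero.mpr hm)]
  simp only [div_eq_inv_mul]
  rfl

theorem bijOn_latticePointsOfDilate (m : ℕ) [NeZero m] :
    Set.BijOn (fun (u : Fin n → ℤ) i => (u i : ℝ) / m) (latticePointsOfDilate n P m)
      (P ∩ (m : ℝ)⁻¹ • span ℤ (Set.range (Pi.basisFun ℝ (Fin n)))) := by
  have hm : (m : ℝ) ≠ 0 := NeZero.ne _
  refine ⟨fun u hu => ⟨(mem_latticePointsOfDilate_iff (NeZero.ne m)).mp hu, ?_⟩,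
    fun u _ v _ huv => ?_, fun x ⟨hxP, hxL⟩ => ?_⟩
  · refine BoxIntegral.unitPartition.mem_smul_span_iff.mpr fun i => ⟨u i, ?_⟩
    simp [mul_div_cancel₀ _ hm]
  · funext i
    simpa [hm] using congrFun huv i
  · choose u hu using BoxIntegral.unitPartition.mem_smul_span_iff.mp hxL
    have hx : (fun i => (u i : ℝ) / m) = x := by
      funext i
      rw [← eq_intCast (algebraMap ℤ ℝ), hu i, mul_div_cancel_left₀ _ hm]
    exact ⟨u, (mem_latticePointsOfDilate_iff (NeZero.ne m)).mpr (hx ▸ hxP), hx⟩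

theorem tsum_eq_finsum_latticePointsOfDilate (hP : IsBounded P) (F : (Fin n → ℝ) → ℝ)
    (m : ℕ) [NeZero m] :
    ∑' x : ↑(P ∩ (m : ℝ)⁻¹ • span ℤ (Set.range (Pi.basisFun ℝ (Fin n)))), F x
      = ∑ᶠ u ∈ latticePointsOfDilate n P m, F (fun i => (u i : ℝ) / m) := by
  have hbij := bijOn_latticePointsOfDilate (P := P) m
  have : Finite ↑(P ∩ (m : ℝ)⁻¹ • span ℤ (Set.range (Pi.basisFun ℝ (Fin n)))) :=
    (hbij.image_eq ▸ (latticePointsOfDilate_finite hP m).image _).to_subtype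
  rw [tsum_eq_finsum (Set.toFinite _), finsum_set_coe_eq_finsum_mem]
  exact (finsum_mem_eq_of_bijOn _ hbij fun _ _ => rfl).symm

theorem tendsto_finsum_latticePointsOfDilate_div_pow (hPb : IsBounded P)
    (hPm : MeasurableSet P) (hPf : volume (frontier P) = 0) {F : (Fin n → ℝ) → ℝ}
    (hF : Continuous F) :
    Tendsto (fun m : ℕ => (∑ᶠ u ∈ latticePointsOfDilate n P m, F (fun i => (u i : ℝ) / m)) / m ^ n)
      atTop (𝓝 (∫ x in P, F x)) := by
  refine (tendsto_tsum_div_pow_atTop_integral P F hF hPb hPm hPf).congr' ?_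
  filter_upwards [eventually_ne_atTop 0] with m hm
  have : NeZero m := ⟨hm⟩
  rw [tsum_eq_finsum_latticePointsOfDilate hPb, Fintype.card_fin]

theorem centroid_apply (hP : IntegrableOn (fun x => x) P) (i : Fin n) :
    centroid n P i = (∫ x in P, x i) / volume.real P := by
  rw [centroid, Pi.smul_apply, smul_eq_mul, eval_integral (fun j => hP.eval j), measureReal_def,
    inv_mul_eq_div]

theorem average_latticePointsOfDilate_apply (hP : IsBounded P) {m : ℕ} (hm : m ≠ 0)
    (i : Fin n) :
    (((m : ℝ) * (latticePointsOfDilate n P m).ncard)⁻¹ •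
        ∑ᶠ u ∈ latticePointsOfDilate n P m, (fun i => (u i : ℝ) : Fin n → ℝ)) i
      = ((∑ᶠ u ∈ latticePointsOfDilate n P m, (u i : ℝ) / m) / m ^ n) /
        ((∑ᶠ _ ∈ latticePointsOfDilate n P m, (1 : ℝ)) / m ^ n) := by
  have hfin := latticePointsOfDilate_finite hP m
  have hm' : (m : ℝ) ^ n ≠ 0 := pow_ne_zero _ (Nat.cast_ne_zero.mpr hm)
  rw [div_div_div_cancel_right₀ hm', finsum_mem_eq_finite_toFinset_sum _ hfin,
    finsum_mem_eq_finite_toFinset_sum _ hfin, finsum_mem_eq_finite_toFinset_sum _ hfin,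
    Set.ncard_eq_toFinset_card _ hfin, Pi.smul_apply, Finset.sum_apply, ← Finset.sum_div]
  simp only [Finset.sum_const, nsmul_eq_mul, mul_one, smul_eq_mul]
  field_simp

end

/-- **Averages of lattice points of dilates converge to the centroid.**
If `P ⊆ ℝⁿ` is a compact convex set with nonempty interior and
`N_m = #((m • P) ∩ ℤⁿ)`, then `(1/(m·N_m)) Σ_{u ∈ (m•P) ∩ ℤⁿ} u → b(P)`,
the centroid of `P`. -/
theorem average_lattice_points_tendsto_centroid (n : ℕ) (P : Set (Fin n → ℝ))
    (hPcomp : IsCompact P) (hPconv : Convex ℝ P) (hPint : (interior P).Nonempty) :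
    Tendsto
      (fun m : ℕ =>
        ((m : ℝ) * ((latticePointsOfDilate n P m).ncard : ℝ))⁻¹ •
          ∑ᶠ u ∈ latticePointsOfDilate n P m, (fun i => (u i : ℝ) : Fin n → ℝ))
      atTop (𝓝 (centroid n P)) := by
  have hPb := hPcomp.isBounded
  have hPm := hPcomp.isClosed.measurableSet
  have hPf := hPconv.addHaar_frontier volume
  have hvol : volume.real P ≠ 0 := (measureReal_ne_zero_iff hPcomp.measure_lt_top.ne).mpr
    (Measure.measure_pos_of_nonempty_interior volume hPint).ne'
  rw [tendsto_pi_nhds]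
  intro i
  have hcount := tendsto_finsum_latticePointsOfDilate_div_pow hPb hPm hPf
    (continuous_const (y := (1 : ℝ)))
  have hmoment := tendsto_finsum_latticePointsOfDilate_div_pow hPb hPm hPf (continuous_apply i)
  rw [setIntegral_const, smul_eq_mul, mul_one] at hcount
  rw [centroid_apply (continuousOn_id.integrableOn_compact hPcomp)]
  refine (hmoment.div hcount hvol).congr' ?_
  filter_upwards [eventually_ne_atTop 0] with m hm
  exact (average_latticePointsOfDilate_apply hPb hm i).symm
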